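/- arXiv:1711.08699 — 6 statements merged into one kernel-verified Lean document; each statement's English description precedes it below -/
import Mathlib

section
/- Let C be an ordered symmetric monoidal category equipped with a lax product structure {(Δ_X, ⊥_X)}. For objects M, N define the projections π₁ : M⊗N ⟶ M as (id_M ⊗ ⊥_N) followed by the right unitor, and π₂ : M⊗N ⟶ N as (⊥_M ⊗ id_N) followed by the left unitor. Then for all morphisms f : K ⟶ M and g : K ⟶ N, the morphism h := Δ_K ; (f ⊗ g) satisfies h ; π₁ ≤ f and h ; π₂ ≤ g, and h is the greatest such morphism: every h' : K ⟶ M⊗N with h' ; π₁ ≤ f and h' ; π₂ ≤ g satisfies h' ≤ h. (Hence the monoidal product of C is a lax product of M and N in the bicategorical sense.) -/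
open CategoryTheory MonoidalCategory

universe v u

/-- An ordered symmetric monoidal category: each hom-set carries a partial order (supplied
as an instance) making composition and tensoring of morphisms monotone. -/
class OrderedSMC (C : Type u) [Category.{v} C] [MonoidalCategory C]
    [SymmetricCategory C] [∀ X Y : C, PartialOrder (X ⟶ Y)] : Prop where
  comp_mono : ∀ {X Y Z : C} {f f' : X ⟶ Y} {g g' : Y ⟶ Z},
    f ≤ f' → g ≤ g' → f ≫ g ≤ f' ≫ g'
  tensor_mono : ∀ {X X' Y Y' : C} {f f' : X ⟶ X'} {g g' : Y ⟶ Y'},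
    f ≤ f' → g ≤ g' → (f ⊗ₘ g) ≤ (f' ⊗ₘ g')

/-- A lax product structure on an ordered symmetric monoidal category: a choice of
cocommutative comonoid `(Δ_X, ⊥_X)` on each object, compatible with the monoidal product,
such that every morphism is a lax comonoid homomorphism. -/
structure LaxProductStructure (C : Type u) [Category.{v} C] [MonoidalCategory C]
    [SymmetricCategory C] [∀ X Y : C, PartialOrder (X ⟶ Y)] where
  /-- comultiplication Δ -/
  dup : ∀ X : C, X ⟶ X ⊗ X
  /-- counit ⊥ -/
  bot : ∀ X : C, X ⟶ 𝟙_ C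
  dup_coassoc : ∀ X : C, dup X ≫ (dup X ▷ X) ≫ (α_ X X X).hom = dup X ≫ (X ◁ dup X)
  dup_bot_left : ∀ X : C, dup X ≫ (bot X ▷ X) = (λ_ X).inv
  dup_bot_right : ∀ X : C, dup X ≫ (X ◁ bot X) = (ρ_ X).inv
  dup_cocomm : ∀ X : C, dup X ≫ (β_ X X).hom = dup X
  dup_tensor : ∀ X Y : C, dup (X ⊗ Y) = (dup X ⊗ₘ dup Y) ≫ tensorμ X X Y Y
  bot_tensor : ∀ X Y : C, bot (X ⊗ Y) = (bot X ⊗ₘ bot Y) ≫ (λ_ (𝟙_ C)).hom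
  lax_dup : ∀ {X Y : C} (f : X ⟶ Y), f ≫ dup Y ≤ dup X ≫ (f ⊗ₘ f)
  lax_bot : ∀ {X Y : C} (f : X ⟶ Y), f ≫ bot Y ≤ bot X

/-!
Discarding can only go down along a morphism (`g ≫ ⊥ ≤ ⊥`), so the pairing `Δ_K ≫ (f ⊗ g)`
projects below `f` and `g`. For maximality, compatibility of `Δ` and `⊥` with `⊗` together with
the counit laws give `Δ_{M⊗N} ≫ (π₁ ⊗ π₂) = 𝟙`; hence, by laxity of `Δ`,
`h' = h' ≫ Δ ≫ (π₁ ⊗ π₂) ≤ Δ_K ≫ (h' ≫ π₁ ⊗ h' ≫ π₂) ≤ Δ_K ≫ (f ⊗ g)`.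
-/

namespace LaxProductStructure

variable {C : Type u} [Category.{v} C] [MonoidalCategory C] [SymmetricCategory C]
  [∀ X Y : C, PartialOrder (X ⟶ Y)] (L : LaxProductStructure C)

def fst (M N : C) : M ⊗ N ⟶ M := (𝟙 M ⊗ₘ L.bot N) ≫ (ρ_ M).hom

def snd (M N : C) : M ⊗ N ⟶ N := (L.bot M ⊗ₘ 𝟙 N) ≫ (λ_ N).hom

lemma dup_comp_tensorHom_bot_comp_rightUnitor {K M : C} (f : K ⟶ M) :
    L.dup K ≫ (f ⊗ₘ L.bot K) ≫ (ρ_ M).hom = f := by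
  rw [tensorHom_def', Category.assoc, reassoc_of% L.dup_bot_right]
  simp

lemma dup_comp_bot_tensorHom_comp_leftUnitor {K N : C} (g : K ⟶ N) :
    L.dup K ≫ (L.bot K ⊗ₘ g) ≫ (λ_ N).hom = g := by
  rw [MonoidalCategory.tensorHom_def, Category.assoc, reassoc_of% L.dup_bot_left]
  simp

lemma dup_comp_fst_tensorHom_snd (M N : C) :
    L.dup (M ⊗ N) ≫ (L.fst M N ⊗ₘ L.snd M N) = 𝟙 (M ⊗ N) := by
  rw [L.dup_tensor, Category.assoc, fst, snd, ← tensorHom_comp_tensorHom,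
    ← tensorμ_natural_assoc, tensorHom_comp_tensorHom_assoc, id_tensorHom, tensorHom_id,
    L.dup_bot_right, L.dup_bot_left]
  -- the braiding inside `tensorμ` now only swaps unit objects, so coherence finishes
  simp only [tensorμ, braiding_tensorUnit_left]
  monoidal

variable [OrderedSMC C]

lemma dup_comp_tensorHom_comp_fst_le {K M N : C} (f : K ⟶ M) (g : K ⟶ N) :
    (L.dup K ≫ (f ⊗ₘ g)) ≫ L.fst M N ≤ f :=
  calc (L.dup K ≫ (f ⊗ₘ g)) ≫ L.fst M N = L.dup K ≫ (f ⊗ₘ g ≫ L.bot N) ≫ (ρ_ M).hom := by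
        simp only [fst, Category.assoc, tensorHom_comp_tensorHom_assoc, Category.comp_id]
    _ ≤ L.dup K ≫ (f ⊗ₘ L.bot K) ≫ (ρ_ M).hom :=
        OrderedSMC.comp_mono le_rfl <| OrderedSMC.comp_mono
          (OrderedSMC.tensor_mono le_rfl (L.lax_bot g)) le_rfl
    _ = f := L.dup_comp_tensorHom_bot_comp_rightUnitor f

lemma dup_comp_tensorHom_comp_snd_le {K M N : C} (f : K ⟶ M) (g : K ⟶ N) :
    (L.dup K ≫ (f ⊗ₘ g)) ≫ L.snd M N ≤ g :=
  calc (L.dup K ≫ (f ⊗ₘ g)) ≫ L.snd M N = L.dup K ≫ (f ≫ L.bot M ⊗ₘ g) ≫ (λ_ N).hom := by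
        simp only [snd, Category.assoc, tensorHom_comp_tensorHom_assoc, Category.comp_id]
    _ ≤ L.dup K ≫ (L.bot K ⊗ₘ g) ≫ (λ_ N).hom :=
        OrderedSMC.comp_mono le_rfl <| OrderedSMC.comp_mono
          (OrderedSMC.tensor_mono (L.lax_bot f) le_rfl) le_rfl
    _ = g := L.dup_comp_bot_tensorHom_comp_leftUnitor g

lemma le_dup_comp_fst_tensorHom_snd {K M N : C} (h : K ⟶ M ⊗ N) :
    h ≤ L.dup K ≫ (h ≫ L.fst M N ⊗ₘ h ≫ L.snd M N) :=
  calc h = (h ≫ L.dup (M ⊗ N)) ≫ (L.fst M N ⊗ₘ L.snd M N) := by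
        rw [Category.assoc, dup_comp_fst_tensorHom_snd, Category.comp_id]
    _ ≤ (L.dup K ≫ (h ⊗ₘ h)) ≫ (L.fst M N ⊗ₘ L.snd M N) :=
        OrderedSMC.comp_mono (L.lax_dup h) le_rfl
    _ = L.dup K ≫ (h ≫ L.fst M N ⊗ₘ h ≫ L.snd M N) := by
        rw [Category.assoc, tensorHom_comp_tensorHom]

end LaxProductStructure

/-- The monoidal product of an ordered symmetric monoidal category with a lax product
structure is a lax product: with projections `π₁ = (id ⊗ ⊥);ρ` and `π₂ = (⊥ ⊗ id);λ`,
`h := Δ_K;(f ⊗ g)` satisfies `h;π₁ ≤ f` and `h;π₂ ≤ g` and is the greatest morphism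
with these properties. -/
theorem laxProduct_of_laxProductStructure {C : Type u} [Category.{v} C] [MonoidalCategory C]
    [SymmetricCategory C] [∀ X Y : C, PartialOrder (X ⟶ Y)] [OrderedSMC C]
    (L : LaxProductStructure C) (K M N : C) (f : K ⟶ M) (g : K ⟶ N) :
    (L.dup K ≫ (f ⊗ₘ g)) ≫ ((𝟙 M ⊗ₘ L.bot N) ≫ (ρ_ M).hom) ≤ f ∧
    (L.dup K ≫ (f ⊗ₘ g)) ≫ ((L.bot M ⊗ₘ 𝟙 N) ≫ (λ_ N).hom) ≤ g ∧
    (∀ h' : K ⟶ M ⊗ N,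
      h' ≫ ((𝟙 M ⊗ₘ L.bot N) ≫ (ρ_ M).hom) ≤ f →
      h' ≫ ((L.bot M ⊗ₘ 𝟙 N) ≫ (λ_ N).hom) ≤ g →
      h' ≤ L.dup K ≫ (f ⊗ₘ g)) :=
  ⟨L.dup_comp_tensorHom_comp_fst_le f g, L.dup_comp_tensorHom_comp_snd_le f g,
    fun h' hfst hsnd => (L.le_dup_comp_fst_tensorHom_snd h').trans <|
      OrderedSMC.comp_mono le_rfl (OrderedSMC.tensor_mono hfst hsnd)⟩
end

section
/- In any cartesian bicategory of relations, the special law holds for every object X: Δ_X ; ∇_X = id_X. -/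
open CategoryTheory MonoidalCategory

universe v u

/-- A cartesian bicategory of relations: a poset-enriched symmetric monoidal category
in which every object carries a cocommutative comonoid `(dup, del)` and a commutative
monoid `(mrg, bng)`, compatible with the monoidal structure, satisfying the adjunction
inequalities and the Frobenius law, and such that every morphism is a lax comonoid
homomorphism. -/
class CartesianBicatRel (C : Type u) [Category.{v} C] [MonoidalCategory C]
    [SymmetricCategory C] [∀ X Y : C, PartialOrder (X ⟶ Y)] where
  comp_mono : ∀ {X Y Z : C} {f f' : X ⟶ Y} {g g' : Y ⟶ Z},
    f ≤ f' → g ≤ g' → f ≫ g ≤ f' ≫ g'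
  tensor_mono : ∀ {X X' Y Y' : C} {f f' : X ⟶ X'} {g g' : Y ⟶ Y'},
    f ≤ f' → g ≤ g' → (f ⊗ₘ g) ≤ (f' ⊗ₘ g')
  /-- comultiplication Δ -/
  dup : ∀ X : C, X ⟶ X ⊗ X
  /-- counit ! -/
  del : ∀ X : C, X ⟶ 𝟙_ C
  /-- multiplication ∇ -/
  mrg : ∀ X : C, X ⊗ X ⟶ X
  /-- unit ? -/
  bng : ∀ X : C, 𝟙_ C ⟶ X
  dup_coassoc : ∀ X : C, dup X ≫ (dup X ▷ X) ≫ (α_ X X X).hom = dup X ≫ (X ◁ dup X)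
  dup_del_left : ∀ X : C, dup X ≫ (del X ▷ X) = (λ_ X).inv
  dup_del_right : ∀ X : C, dup X ≫ (X ◁ del X) = (ρ_ X).inv
  dup_cocomm : ∀ X : C, dup X ≫ (β_ X X).hom = dup X
  mrg_assoc : ∀ X : C, (mrg X ▷ X) ≫ mrg X = (α_ X X X).hom ≫ (X ◁ mrg X) ≫ mrg X
  mrg_bng_left : ∀ X : C, (bng X ▷ X) ≫ mrg X = (λ_ X).hom
  mrg_bng_right : ∀ X : C, (X ◁ bng X) ≫ mrg X = (ρ_ X).hom
  mrg_comm : ∀ X : C, (β_ X X).hom ≫ mrg X = mrg X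
  dup_tensor : ∀ X Y : C, dup (X ⊗ Y) = (dup X ⊗ₘ dup Y) ≫ tensorμ X X Y Y
  del_tensor : ∀ X Y : C, del (X ⊗ Y) = (del X ⊗ₘ del Y) ≫ (λ_ (𝟙_ C)).hom
  dup_unitObj : dup (𝟙_ C) = (λ_ (𝟙_ C)).inv
  del_unitObj : del (𝟙_ C) = 𝟙 (𝟙_ C)
  mrg_tensor : ∀ X Y : C, mrg (X ⊗ Y) = tensorμ X Y X Y ≫ (mrg X ⊗ₘ mrg Y)
  bng_tensor : ∀ X Y : C, bng (X ⊗ Y) = (λ_ (𝟙_ C)).inv ≫ (bng X ⊗ₘ bng Y)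
  mrg_unitObj : mrg (𝟙_ C) = (λ_ (𝟙_ C)).hom
  bng_unitObj : bng (𝟙_ C) = 𝟙 (𝟙_ C)
  adj_dup_unit : ∀ X : C, 𝟙 X ≤ dup X ≫ mrg X
  adj_dup_counit : ∀ X : C, mrg X ≫ dup X ≤ 𝟙 (X ⊗ X)
  adj_del_counit : ∀ X : C, bng X ≫ del X ≤ 𝟙 (𝟙_ C)
  adj_del_unit : ∀ X : C, 𝟙 X ≤ del X ≫ bng X
  frob_left : ∀ X : C, (dup X ▷ X) ≫ (α_ X X X).hom ≫ (X ◁ mrg X) = mrg X ≫ dup X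
  frob_right : ∀ X : C, (X ◁ dup X) ≫ (α_ X X X).inv ≫ (mrg X ▷ X) = mrg X ≫ dup X
  lax_dup : ∀ {X Y : C} (R : X ⟶ Y), R ≫ dup Y ≤ dup X ≫ (R ⊗ₘ R)
  lax_del : ∀ {X Y : C} (R : X ⟶ Y), R ≫ del Y ≤ del X

namespace CartesianBicatRel

variable {C : Type u} [Category.{v} C] [MonoidalCategory C] [SymmetricCategory C]
  [∀ X Y : C, PartialOrder (X ⟶ Y)] [CartesianBicatRel C]

/-- The dagger `R† : Y ⟶ X` of `R : X ⟶ Y`, built from the cup `η_X = ?;Δ` and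
the cap `ε_Y = ∇;!`. -/
def dagger {X Y : C} (R : X ⟶ Y) : Y ⟶ X :=
  (λ_ Y).inv ≫ ((bng X ≫ dup X) ▷ Y) ≫ (α_ X X Y).hom ≫
    (X ◁ (R ▷ Y)) ≫ (X ◁ (mrg Y ≫ del Y)) ≫ (ρ_ X).hom

/-- `R` is single-valued. -/
def SingleValued {X Y : C} (R : X ⟶ Y) : Prop := dup X ≫ (R ⊗ₘ R) ≤ R ≫ dup Y

/-- `R` is total. -/
def Total {X Y : C} (R : X ⟶ Y) : Prop := del X ≤ R ≫ del Y

/-- `R` is injective. -/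
def Injective {X Y : C} (R : X ⟶ Y) : Prop := (R ⊗ₘ R) ≫ mrg Y ≤ mrg X ≫ R

/-- `R` is surjective. -/
def Surjective {X Y : C} (R : X ⟶ Y) : Prop := bng Y ≤ bng X ≫ R

/-- A map is a single-valued and total morphism. -/
def IsMap {X Y : C} (R : X ⟶ Y) : Prop := SingleValued R ∧ Total R

/-- A comap is an injective and surjective morphism. -/
def IsComap {X Y : C} (R : X ⟶ Y) : Prop := Injective R ∧ Surjective R

end CartesianBicatRel

/-
Lax preservation of `Δ` by the point `?_X : I ⟶ X` gives `?;Δ ≤ ? ⊗ ?`, hence `?;Δ;∇ ≤ ?;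
by the Frobenius law `Δ` factors through the cup `?;Δ`, which turns `Δ;∇` into `(?;Δ;∇) ⊗ id`
followed by `∇`, and therefore `Δ;∇ ≤ (? ⊗ id);∇ = id`. The reverse inequality is the
adjunction unit `id ≤ Δ;∇`.
-/

namespace CartesianBicatRel

variable {C : Type u} [Category.{v} C] [MonoidalCategory C] [SymmetricCategory C]
  [∀ X Y : C, PartialOrder (X ⟶ Y)] [CartesianBicatRel C]

theorem whiskerRight_mono {X X' : C} {f f' : X ⟶ X'} (h : f ≤ f') (Y : C) :
    f ▷ Y ≤ f' ▷ Y := by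
  simpa only [← tensorHom_id] using tensor_mono h le_rfl

theorem point_comp_dup_le {Y : C} (p : 𝟙_ C ⟶ Y) :
    p ≫ dup Y ≤ (λ_ (𝟙_ C)).inv ≫ (p ⊗ₘ p) := by
  simpa only [dup_unitObj] using lax_dup p

theorem bng_dup_mrg_le (X : C) : bng X ≫ dup X ≫ mrg X ≤ bng X :=
  calc bng X ≫ dup X ≫ mrg X
      ≤ ((λ_ (𝟙_ C)).inv ≫ (bng X ⊗ₘ bng X)) ≫ mrg X := by
        simpa only [Category.assoc] using comp_mono (point_comp_dup_le (bng X)) le_rfl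
    _ = bng X := by
        rw [tensorHom_def']
        slice_lhs 3 4 => rw [mrg_bng_left X]
        simp

theorem dup_eq_cup_whiskerRight (X : C) :
    dup X = (λ_ X).inv ≫ ((bng X ≫ dup X) ▷ X) ≫ (α_ X X X).hom ≫ (X ◁ mrg X) := by
  rw [comp_whiskerRight]
  slice_rhs 3 5 => rw [frob_left X]
  slice_rhs 2 3 => rw [mrg_bng_left X]
  simp

theorem dup_mrg_eq (X : C) :
    dup X ≫ mrg X = (λ_ X).inv ≫ ((bng X ≫ dup X ≫ mrg X) ▷ X) ≫ mrg X := by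
  have mrg_assoc' : (X ◁ mrg X) ≫ mrg X = (α_ X X X).inv ≫ (mrg X ▷ X) ≫ mrg X := by
    rw [mrg_assoc X, Iso.inv_hom_id_assoc]
  conv_lhs => rw [dup_eq_cup_whiskerRight]
  slice_lhs 4 5 => rw [mrg_assoc']
  slice_lhs 3 4 => rw [Iso.hom_inv_id]
  simp [comp_whiskerRight]

theorem dup_mrg_le_id (X : C) : dup X ≫ mrg X ≤ 𝟙 X :=
  calc dup X ≫ mrg X
      = (λ_ X).inv ≫ ((bng X ≫ dup X ≫ mrg X) ▷ X) ≫ mrg X := dup_mrg_eq X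
    _ ≤ (λ_ X).inv ≫ (bng X ▷ X) ≫ mrg X :=
        comp_mono le_rfl (comp_mono (whiskerRight_mono (bng_dup_mrg_le X) X) le_rfl)
    _ = 𝟙 X := by rw [mrg_bng_left X, Iso.inv_hom_id]

end CartesianBicatRel

open CartesianBicatRel in
/-- In any cartesian bicategory of relations, the special law `Δ_X ; ∇_X = id_X` holds. -/
theorem special_law {C : Type u} [Category.{v} C] [MonoidalCategory C] [SymmetricCategory C]
    [∀ X Y : C, PartialOrder (X ⟶ Y)] [CartesianBicatRel C] (X : C) :
    dup X ≫ mrg X = 𝟙 X :=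
  le_antisymm (dup_mrg_le_id X) (adj_dup_unit X)
end

section
/- In a cartesian bicategory of relations, for any morphism R : X ⟶ Y: (span cancellation) R is single-valued and surjective if and only if R† ; R = id_Y; and (cospan cancellation) R is injective and total if and only if R ; R† = id_X. -/
open CategoryTheory MonoidalCategory

universe v u

/-!
Every object is self-dual through the cup `η = ?;Δ` and the cap `ε = ∇;!`, and `R†` is the mate
of `R` under this duality. Each of the four properties is then one half of an adjunction-type
inequality: `R` is single-valued iff `R†;R ≤ id`, surjective iff `id ≤ R†;R`, injective iff
`R;R† ≤ id`, and total iff `id ≤ R;R†`; cancellation is antisymmetry.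

For the forward implications, `R†;R` is the zigzag through `η;(R⊗R)` and `R;R†` the zigzag
through `(R⊗R);ε`; single-valuedness and surjectivity compare `η;(R⊗R)` with `η`, injectivity
and totality compare `(R⊗R);ε` with `ε`, and the zigzag through `η` and `ε` is the identity.
For the converses, a copy of `R` can be absorbed into `R†`:
`Δ;(R⊗id) ≤ R;Δ;(id⊗R†)` and, dually, `(id⊗R);∇ ≤ (R†⊗id);∇;R`.
-/

section Symmetric

variable {C : Type u} [Category.{v} C] [MonoidalCategory C] [SymmetricCategory C]

lemma zigzag_eq_mirrored_zigzag {A B Y : C} (n : 𝟙_ C ⟶ A ⊗ B) (c : B ⊗ Y ⟶ 𝟙_ C) :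
    (λ_ Y).inv ≫ (n ▷ Y) ≫ (α_ A B Y).hom ≫ (A ◁ c) ≫ (ρ_ A).hom =
      (ρ_ Y).inv ≫ (Y ◁ (n ≫ (β_ A B).hom)) ≫ (α_ Y B A).inv ≫
        (((β_ Y B).hom ≫ c) ▷ A) ≫ (λ_ A).hom := by
  have h_cap : (λ_ Y).inv ≫ (n ▷ Y) ≫ (α_ A B Y).hom ≫ (A ◁ c) ≫ (ρ_ A).hom =
      (λ_ Y).inv ≫ (n ▷ Y) ≫ (α_ A B Y).hom ≫ (β_ A (B ⊗ Y)).hom ≫ (c ▷ A) ≫ (λ_ A).hom := by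
    rw [← BraidedCategory.braiding_naturality_right_assoc A c, braiding_leftUnitor]
  have h_cup : (ρ_ Y).inv ≫ (Y ◁ (n ≫ (β_ A B).hom)) =
      (λ_ Y).inv ≫ ((n ≫ (β_ A B).hom) ▷ Y) ≫ (β_ (B ⊗ A) Y).hom := by
    rw [BraidedCategory.braiding_naturality_left (n ≫ (β_ A B).hom) Y,
      braiding_tensorUnit_left]
    simp
  rw [h_cap, reassoc_of% h_cup]
  simp only [BraidedCategory.braiding_tensor_left_hom, BraidedCategory.braiding_tensor_right_hom,
    comp_whiskerRight, Category.assoc, Iso.hom_inv_id_assoc]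
  slice_rhs 7 8 => rw [← comp_whiskerRight, SymmetricCategory.symmetry]
  simp

end Symmetric

namespace CartesianBicatRel

variable {C : Type u} [Category.{v} C] [MonoidalCategory C] [SymmetricCategory C]
  [∀ X Y : C, PartialOrder (X ⟶ Y)] [CartesianBicatRel C]

lemma whiskerRight_mono_s6 {A B : C} {f g : A ⟶ B} (h : f ≤ g) (Z : C) : f ▷ Z ≤ g ▷ Z := by
  simpa only [MonoidalCategory.tensorHom_id] using tensor_mono h (le_refl (𝟙 Z))

lemma whiskerLeft_mono (Z : C) {A B : C} {f g : A ⟶ B} (h : f ≤ g) : Z ◁ f ≤ Z ◁ g := by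
  simpa only [MonoidalCategory.id_tensorHom] using tensor_mono (le_refl (𝟙 Z)) h

def cup (X : C) : 𝟙_ C ⟶ X ⊗ X := bng X ≫ dup X

def cap (X : C) : X ⊗ X ⟶ 𝟙_ C := mrg X ≫ del X

variable {X Y : C}

lemma bng_comp_le (R : X ⟶ Y) : bng X ≫ R ≤ bng Y :=
  calc bng X ≫ R = (bng X ≫ R) ≫ 𝟙 Y := by simp
    _ ≤ (bng X ≫ R) ≫ (del Y ≫ bng Y) := comp_mono le_rfl (adj_del_unit Y)
    _ = bng X ≫ (R ≫ del Y) ≫ bng Y := by simp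
    _ ≤ bng X ≫ del X ≫ bng Y := comp_mono le_rfl (comp_mono (lax_del R) le_rfl)
    _ = (bng X ≫ del X) ≫ bng Y := by simp
    _ ≤ 𝟙 (𝟙_ C) ≫ bng Y := comp_mono (adj_del_counit X) le_rfl
    _ = bng Y := by simp

lemma mrg_comp_le (R : X ⟶ Y) : mrg X ≫ R ≤ (R ⊗ₘ R) ≫ mrg Y :=
  calc mrg X ≫ R = (mrg X ≫ R) ≫ 𝟙 Y := by simp
    _ ≤ (mrg X ≫ R) ≫ (dup Y ≫ mrg Y) := comp_mono le_rfl (adj_dup_unit Y)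
    _ = mrg X ≫ (R ≫ dup Y) ≫ mrg Y := by simp
    _ ≤ mrg X ≫ (dup X ≫ (R ⊗ₘ R)) ≫ mrg Y := comp_mono le_rfl (comp_mono (lax_dup R) le_rfl)
    _ = (mrg X ≫ dup X) ≫ (R ⊗ₘ R) ≫ mrg Y := by simp
    _ ≤ 𝟙 (X ⊗ X) ≫ (R ⊗ₘ R) ≫ mrg Y := comp_mono (adj_dup_counit X) le_rfl
    _ = (R ⊗ₘ R) ≫ mrg Y := by simp

lemma le_dup_comp_tensorHom_comp_mrg (R : X ⟶ Y) : R ≤ dup X ≫ (R ⊗ₘ R) ≫ mrg Y :=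
  calc R = 𝟙 X ≫ R := by simp
    _ ≤ (dup X ≫ mrg X) ≫ R := comp_mono (adj_dup_unit X) le_rfl
    _ = dup X ≫ mrg X ≫ R := by simp
    _ ≤ dup X ≫ (R ⊗ₘ R) ≫ mrg Y := comp_mono le_rfl (mrg_comp_le R)

lemma dup_le_del_comp_cup : dup X ≤ del X ≫ cup X :=
  calc dup X = 𝟙 X ≫ dup X := by simp
    _ ≤ (del X ≫ bng X) ≫ dup X := comp_mono (adj_del_unit X) le_rfl
    _ = del X ≫ cup X := by simp [cup]

lemma mrg_le_cap_comp_bng : mrg X ≤ cap X ≫ bng X :=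
  calc mrg X = mrg X ≫ 𝟙 X := by simp
    _ ≤ mrg X ≫ (del X ≫ bng X) := comp_mono le_rfl (adj_del_unit X)
    _ = cap X ≫ bng X := by simp [cap]

lemma dup_coassoc_inv (X : C) :
    dup X ≫ (dup X ▷ X) = dup X ≫ (X ◁ dup X) ≫ (α_ X X X).inv := by
  rw [← Category.assoc, ← dup_coassoc]; simp

lemma mrg_assoc_inv (X : C) :
    (X ◁ mrg X) ≫ mrg X = (α_ X X X).inv ≫ (mrg X ▷ X) ≫ mrg X := by
  rw [mrg_assoc]; simp

lemma cup_whiskerRight_comp_mrg (X : C) :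
    (λ_ X).inv ≫ (cup X ▷ X) ≫ (α_ X X X).hom ≫ (X ◁ mrg X) = dup X := by
  simp only [cup, comp_whiskerRight, Category.assoc]
  rw [frob_left, ← Category.assoc (bng X ▷ X), mrg_bng_left]
  simp

lemma cup_cap_zigzag (X : C) :
    (λ_ X).inv ≫ (cup X ▷ X) ≫ (α_ X X X).hom ≫ (X ◁ cap X) ≫ (ρ_ X).hom = 𝟙 X := by
  simp only [cap, MonoidalCategory.whiskerLeft_comp, Category.assoc]
  rw [reassoc_of% (cup_whiskerRight_comp_mrg X), reassoc_of% (dup_del_right X)]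
  simp

lemma mrg_eq_dup_cap (Y : C) :
    mrg Y = (dup Y ▷ Y) ≫ (α_ Y Y Y).hom ≫ (Y ◁ cap Y) ≫ (ρ_ Y).hom := by
  simp only [cap, MonoidalCategory.whiskerLeft_comp, Category.assoc]
  rw [reassoc_of% (frob_left Y), reassoc_of% (dup_del_right Y)]
  simp

lemma dagger_comp_self_eq (R : X ⟶ Y) :
    dagger R ≫ R = (λ_ Y).inv ≫ ((cup X ≫ (R ⊗ₘ R)) ▷ Y) ≫ (α_ Y Y Y).hom ≫
      (Y ◁ cap Y) ≫ (ρ_ Y).hom := by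
  simp only [dagger, cup, cap, MonoidalCategory.tensorHom_def, comp_whiskerRight, MonoidalCategory.whiskerLeft_comp,
    Category.assoc]
  rw [← rightUnitor_naturality, whisker_exchange_assoc, whisker_exchange_assoc,
    whisker_exchange_assoc]
  monoidal

lemma self_comp_dagger_eq (R : X ⟶ Y) :
    R ≫ dagger R = (λ_ X).inv ≫ (cup X ▷ X) ≫ (α_ X X X).hom ≫
      (X ◁ ((R ⊗ₘ R) ≫ cap Y)) ≫ (ρ_ X).hom := by
  simp only [dagger, cup, cap, MonoidalCategory.tensorHom_def', comp_whiskerRight, MonoidalCategory.whiskerLeft_comp,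
    Category.assoc]
  rw [leftUnitor_inv_naturality_assoc, whisker_exchange_assoc, whisker_exchange_assoc]
  monoidal

lemma dagger_eq_mirrored (R : X ⟶ Y) :
    dagger R = (ρ_ Y).inv ≫ (Y ◁ (cup X ≫ (R ▷ X))) ≫ (α_ Y Y X).inv ≫
      (cap Y ▷ X) ≫ (λ_ X).hom := by
  have h_cup : cup X ≫ (X ◁ R) ≫ (β_ X Y).hom = cup X ≫ (R ▷ X) := by
    rw [BraidedCategory.braiding_naturality_right]
    simp only [cup, Category.assoc, reassoc_of% (dup_cocomm X)]
  have h_cap : (β_ Y Y).hom ≫ cap Y = cap Y := by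
    rw [cap, ← Category.assoc, mrg_comm]
  have h_dagger : dagger R = (λ_ Y).inv ≫ ((cup X ≫ (X ◁ R)) ▷ Y) ≫ (α_ X Y Y).hom ≫
      (X ◁ cap Y) ≫ (ρ_ X).hom := by
    simp only [dagger, cup, cap, comp_whiskerRight, MonoidalCategory.whiskerLeft_comp, Category.assoc]
    monoidal
  rw [h_dagger, zigzag_eq_mirrored_zigzag, h_cap, Category.assoc, h_cup]

lemma dup_whiskerLeft_dagger (R : X ⟶ Y) :
    dup Y ≫ (Y ◁ dagger R) =
      (ρ_ Y).inv ≫ (Y ◁ (cup X ≫ (R ▷ X))) ≫ (α_ Y Y X).inv ≫ (mrg Y ▷ X) := by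
  symm
  rw [mrg_eq_dup_cap Y]
  simp only [comp_whiskerRight]
  rw [← associator_inv_naturality_left_assoc, whisker_exchange_assoc,
    ← rightUnitor_inv_naturality_assoc, dagger_eq_mirrored, cap]
  simp only [MonoidalCategory.whiskerLeft_comp, Category.assoc]
  monoidal

lemma dagger_whiskerRight_comp_mrg (R : X ⟶ Y) :
    (dagger R ▷ X) ≫ mrg X =
      (Y ◁ (dup X ≫ (R ▷ X))) ≫ (α_ Y Y X).inv ≫ (cap Y ▷ X) ≫ (λ_ X).hom := by
  have h_cup : (λ_ X).inv ≫ ((cup X ≫ (R ▷ X)) ▷ X) ≫ (α_ Y X X).hom ≫ (Y ◁ mrg X) =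
      dup X ≫ (R ▷ X) := by
    simp only [comp_whiskerRight, Category.assoc]
    rw [associator_naturality_left_assoc, ← whisker_exchange, ← cup_whiskerRight_comp_mrg X]
    simp only [Category.assoc]
  rw [← h_cup, dagger_eq_mirrored, cap]
  simp only [comp_whiskerRight, MonoidalCategory.whiskerLeft_comp, Category.assoc]
  rw [associator_inv_naturality_right_assoc, whisker_exchange_assoc, whisker_exchange_assoc,
    leftUnitor_naturality]
  monoidal

lemma dup_comp_whiskerRight_le (R : X ⟶ Y) : dup X ≫ (R ▷ X) ≤ R ≫ dup Y ≫ (Y ◁ dagger R) :=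
  calc dup X ≫ (R ▷ X)
      ≤ dup X ≫ ((dup X ≫ (R ⊗ₘ R) ≫ mrg Y) ▷ X) :=
        comp_mono le_rfl (whiskerRight_mono_s6 (le_dup_comp_tensorHom_comp_mrg R) X)
    _ = dup X ≫ (X ◁ dup X) ≫ (α_ X X X).inv ≫ (((R ⊗ₘ R) ≫ mrg Y) ▷ X) := by
        rw [comp_whiskerRight, reassoc_of% (dup_coassoc_inv X)]
    _ ≤ dup X ≫ (X ◁ (del X ≫ cup X)) ≫ (α_ X X X).inv ≫ (((R ⊗ₘ R) ≫ mrg Y) ▷ X) :=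
        comp_mono le_rfl (comp_mono (whiskerLeft_mono X dup_le_del_comp_cup) le_rfl)
    _ = (ρ_ X).inv ≫ (X ◁ cup X) ≫ (α_ X X X).inv ≫ ((R ⊗ₘ R) ▷ X) ≫ (mrg Y ▷ X) := by
        simp only [MonoidalCategory.whiskerLeft_comp, comp_whiskerRight, Category.assoc]
        rw [reassoc_of% (dup_del_right X)]
    _ = R ≫ (ρ_ Y).inv ≫ (Y ◁ (cup X ≫ (R ▷ X))) ≫ (α_ Y Y X).inv ≫ (mrg Y ▷ X) := by
        rw [rightUnitor_inv_naturality_assoc, ← whisker_exchange_assoc,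
          MonoidalCategory.whiskerLeft_comp]
        simp only [Category.assoc]
        rw [associator_inv_naturality_left_assoc, associator_inv_naturality_middle_assoc,
          MonoidalCategory.tensorHom_def]
        simp only [comp_whiskerRight, Category.assoc]
        rw [← comp_whiskerRight_assoc, ← whisker_exchange, comp_whiskerRight_assoc]
    _ = R ≫ dup Y ≫ (Y ◁ dagger R) := by rw [dup_whiskerLeft_dagger]

lemma whiskerLeft_comp_mrg_le (R : X ⟶ Y) : (Y ◁ R) ≫ mrg Y ≤ (dagger R ▷ X) ≫ mrg X ≫ R :=
  calc (Y ◁ R) ≫ mrg Y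
      ≤ (Y ◁ (dup X ≫ (R ⊗ₘ R) ≫ mrg Y)) ≫ mrg Y :=
        comp_mono (whiskerLeft_mono Y (le_dup_comp_tensorHom_comp_mrg R)) le_rfl
    _ = (Y ◁ (dup X ≫ (R ⊗ₘ R))) ≫ (α_ Y Y Y).inv ≫ (mrg Y ▷ Y) ≫ mrg Y := by
        rw [← Category.assoc (dup X), MonoidalCategory.whiskerLeft_comp, Category.assoc, mrg_assoc_inv]
    _ ≤ (Y ◁ (dup X ≫ (R ⊗ₘ R))) ≫ (α_ Y Y Y).inv ≫ ((cap Y ≫ bng Y) ▷ Y) ≫ mrg Y :=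
        comp_mono le_rfl (comp_mono le_rfl (comp_mono (whiskerRight_mono_s6 mrg_le_cap_comp_bng Y)
          le_rfl))
    _ = (dagger R ▷ X) ≫ mrg X ≫ R := by
        rw [reassoc_of% (dagger_whiskerRight_comp_mrg R), comp_whiskerRight, Category.assoc,
          mrg_bng_left, MonoidalCategory.tensorHom_def]
        simp only [MonoidalCategory.whiskerLeft_comp, Category.assoc]
        rw [associator_inv_naturality_right_assoc, whisker_exchange_assoc, leftUnitor_naturality]

lemma singleValued_iff_dagger_comp_le_id (R : X ⟶ Y) : SingleValued R ↔ dagger R ≫ R ≤ 𝟙 Y := by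
  constructor
  · intro h
    have h_cup : cup X ≫ (R ⊗ₘ R) ≤ cup Y :=
      calc cup X ≫ (R ⊗ₘ R) = bng X ≫ dup X ≫ (R ⊗ₘ R) := by simp [cup]
        _ ≤ bng X ≫ R ≫ dup Y := comp_mono le_rfl h
        _ = (bng X ≫ R) ≫ dup Y := by simp
        _ ≤ cup Y := comp_mono (bng_comp_le R) le_rfl
    rw [dagger_comp_self_eq, ← cup_cap_zigzag Y]
    exact comp_mono le_rfl (comp_mono (whiskerRight_mono_s6 h_cup Y) le_rfl)
  · intro h
    calc dup X ≫ (R ⊗ₘ R) = (dup X ≫ (R ▷ X)) ≫ (Y ◁ R) := by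
          rw [MonoidalCategory.tensorHom_def, Category.assoc]
      _ ≤ (R ≫ dup Y ≫ (Y ◁ dagger R)) ≫ (Y ◁ R) :=
          comp_mono (dup_comp_whiskerRight_le R) le_rfl
      _ = R ≫ dup Y ≫ (Y ◁ (dagger R ≫ R)) := by simp
      _ ≤ R ≫ dup Y ≫ (Y ◁ 𝟙 Y) := comp_mono le_rfl (comp_mono le_rfl (whiskerLeft_mono Y h))
      _ = R ≫ dup Y := by simp

lemma surjective_iff_id_le_dagger_comp (R : X ⟶ Y) : Surjective R ↔ 𝟙 Y ≤ dagger R ≫ R := by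
  constructor
  · intro h
    have h_cup : cup Y ≤ cup X ≫ (R ⊗ₘ R) :=
      calc cup Y = bng Y ≫ dup Y := rfl
        _ ≤ (bng X ≫ R) ≫ dup Y := comp_mono h le_rfl
        _ = bng X ≫ R ≫ dup Y := by simp
        _ ≤ bng X ≫ dup X ≫ (R ⊗ₘ R) := comp_mono le_rfl (lax_dup R)
        _ = cup X ≫ (R ⊗ₘ R) := by simp [cup]
    rw [dagger_comp_self_eq, ← cup_cap_zigzag Y]
    exact comp_mono le_rfl (comp_mono (whiskerRight_mono_s6 h_cup Y) le_rfl)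
  · intro h
    calc bng Y = bng Y ≫ 𝟙 Y := by simp
      _ ≤ bng Y ≫ dagger R ≫ R := comp_mono le_rfl h
      _ = (bng Y ≫ dagger R) ≫ R := by simp
      _ ≤ bng X ≫ R := comp_mono (bng_comp_le (dagger R)) le_rfl

lemma injective_iff_comp_dagger_le_id (R : X ⟶ Y) :
    CartesianBicatRel.Injective R ↔ R ≫ dagger R ≤ 𝟙 X := by
  constructor
  · intro h
    have h_cap : (R ⊗ₘ R) ≫ cap Y ≤ cap X :=
      calc (R ⊗ₘ R) ≫ cap Y = ((R ⊗ₘ R) ≫ mrg Y) ≫ del Y := by simp [cap]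
        _ ≤ (mrg X ≫ R) ≫ del Y := comp_mono h le_rfl
        _ = mrg X ≫ R ≫ del Y := by simp
        _ ≤ cap X := comp_mono le_rfl (lax_del R)
    rw [self_comp_dagger_eq, ← cup_cap_zigzag X]
    exact comp_mono le_rfl (comp_mono le_rfl (comp_mono le_rfl
      (comp_mono (whiskerLeft_mono X h_cap) le_rfl)))
  · intro h
    calc (R ⊗ₘ R) ≫ mrg Y = (R ▷ X) ≫ (Y ◁ R) ≫ mrg Y := by simp [MonoidalCategory.tensorHom_def]
      _ ≤ (R ▷ X) ≫ (dagger R ▷ X) ≫ mrg X ≫ R :=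
          comp_mono le_rfl (whiskerLeft_comp_mrg_le R)
      _ = ((R ≫ dagger R) ▷ X) ≫ mrg X ≫ R := by simp
      _ ≤ (𝟙 X ▷ X) ≫ mrg X ≫ R := comp_mono (whiskerRight_mono_s6 h X) le_rfl
      _ = mrg X ≫ R := by simp

lemma total_iff_id_le_comp_dagger (R : X ⟶ Y) : Total R ↔ 𝟙 X ≤ R ≫ dagger R := by
  constructor
  · intro h
    have h_cap : cap X ≤ (R ⊗ₘ R) ≫ cap Y :=
      calc cap X = mrg X ≫ del X := rfl
        _ ≤ mrg X ≫ R ≫ del Y := comp_mono le_rfl h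
        _ = (mrg X ≫ R) ≫ del Y := by simp
        _ ≤ ((R ⊗ₘ R) ≫ mrg Y) ≫ del Y := comp_mono (mrg_comp_le R) le_rfl
        _ = (R ⊗ₘ R) ≫ cap Y := by simp [cap]
    rw [self_comp_dagger_eq, ← cup_cap_zigzag X]
    exact comp_mono le_rfl (comp_mono le_rfl (comp_mono le_rfl
      (comp_mono (whiskerLeft_mono X h_cap) le_rfl)))
  · intro h
    calc del X = 𝟙 X ≫ del X := by simp
      _ ≤ (R ≫ dagger R) ≫ del X := comp_mono h le_rfl
      _ = R ≫ dagger R ≫ del X := by simp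
      _ ≤ R ≫ del Y := comp_mono le_rfl (lax_del (dagger R))

end CartesianBicatRel

open CartesianBicatRel in
/-- Span and cospan cancellation. -/
theorem span_cospan_cancellation {C : Type u} [Category.{v} C] [MonoidalCategory C]
    [SymmetricCategory C] [∀ X Y : C, PartialOrder (X ⟶ Y)] [CartesianBicatRel C]
    {X Y : C} (R : X ⟶ Y) :
    ((SingleValued R ∧ Surjective R) ↔ dagger R ≫ R = 𝟙 Y) ∧
    ((CartesianBicatRel.Injective R ∧ Total R) ↔ R ≫ dagger R = 𝟙 X) := by
  rw [le_antisymm_iff, le_antisymm_iff, singleValued_iff_dagger_comp_le_id,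
    surjective_iff_id_le_dagger_comp, injective_iff_comp_dagger_le_id,
    total_iff_id_le_comp_dagger]
  exact ⟨Iff.rfl, Iff.rfl⟩
end

section
/- In a cartesian bicategory of relations, define for R, S : X ⟶ Y the convolution R ⊼ S := Δ_X ; (R ⊗ S) ; ∇_Y and the morphism ⊤ := !_X ; ?_Y. Then ⊼ is associative, commutative and idempotent with unit ⊤; every R : X ⟶ Y satisfies R ≤ ⊤; and R ⊼ S = S if and only if S ≤ R. Consequently each hom-poset C(X,Y) is a meet-semilattice with greatest element ⊤ in which the meet is given by convolution ⊼. -/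
open CategoryTheory MonoidalCategory

universe v u

/-!
The lax comonoid law `R ; Δ ≤ Δ ; (R ⊗ R)` together with `id ≤ Δ ; ∇` gives `R ≤ R ⊼ R`, and
`R ; ! ≤ !` together with `id ≤ ! ; ?` gives `R ≤ ⊤`. The counit and unit laws make `⊤` a unit
for `⊼`, so monotonicity of `⊼` yields `R ⊼ S ≤ R ⊼ ⊤ = R`: convolution is the binary meet.
Associativity is coassociativity of `Δ` and associativity of `∇`, commutativity their
(co)commutativity.
-/

namespace CartesianBicatRel

variable {C : Type u} [Category.{v} C] [MonoidalCategory C] [SymmetricCategory C]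
  [∀ X Y : C, PartialOrder (X ⟶ Y)] [CartesianBicatRel C] {X Y : C}

def conv (R S : X ⟶ Y) : X ⟶ Y := dup X ≫ (R ⊗ₘ S) ≫ mrg Y

def top (X Y : C) : X ⟶ Y := del X ≫ bng Y

theorem le_top (R : X ⟶ Y) : R ≤ top X Y :=
  calc R = R ≫ 𝟙 Y := (Category.comp_id R).symm
    _ ≤ R ≫ del Y ≫ bng Y := comp_mono le_rfl (adj_del_unit Y)
    _ = (R ≫ del Y) ≫ bng Y := (Category.assoc _ _ _).symm
    _ ≤ del X ≫ bng Y := comp_mono (lax_del R) le_rfl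

theorem le_conv_self (R : X ⟶ Y) : R ≤ conv R R :=
  calc R = R ≫ 𝟙 Y := (Category.comp_id R).symm
    _ ≤ R ≫ dup Y ≫ mrg Y := comp_mono le_rfl (adj_dup_unit Y)
    _ = (R ≫ dup Y) ≫ mrg Y := (Category.assoc _ _ _).symm
    _ ≤ (dup X ≫ (R ⊗ₘ R)) ≫ mrg Y := comp_mono (lax_dup R) le_rfl
    _ = conv R R := Category.assoc _ _ _

theorem conv_mono {R R' S S' : X ⟶ Y} (hR : R ≤ R') (hS : S ≤ S') :
    conv R S ≤ conv R' S' :=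
  comp_mono le_rfl (comp_mono (tensor_mono hR hS) le_rfl)

theorem conv_top (R : X ⟶ Y) : conv R (top X Y) = R := by
  have hsplit : R ⊗ₘ (del X ≫ bng Y) = (X ◁ del X) ≫ (R ▷ 𝟙_ C) ≫ (Y ◁ bng Y) := by
    simp [← id_tensorHom, ← tensorHom_id, tensorHom_comp_tensorHom]
  simp only [conv, top, hsplit, Category.assoc, mrg_bng_right, ← Category.assoc (dup X),
    dup_del_right, ← rightUnitor_inv_naturality_assoc, Iso.inv_hom_id, Category.comp_id]

theorem conv_comm (R S : X ⟶ Y) : conv R S = conv S R := by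
  calc conv R S = dup X ≫ (R ⊗ₘ S) ≫ (β_ Y Y).hom ≫ mrg Y := by rw [conv, mrg_comm]
    _ = (dup X ≫ (β_ X X).hom) ≫ (S ⊗ₘ R) ≫ mrg Y := by
      rw [BraidedCategory.braiding_naturality_assoc, Category.assoc]
    _ = conv S R := by rw [dup_cocomm, conv]

theorem conv_le_left (R S : X ⟶ Y) : conv R S ≤ R :=
  calc conv R S ≤ conv R (top X Y) := conv_mono le_rfl (le_top S)
    _ = R := conv_top R

theorem conv_le_right (R S : X ⟶ Y) : conv R S ≤ S :=
  conv_comm R S ▸ conv_le_left S R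

theorem le_conv {R S T : X ⟶ Y} (hR : T ≤ R) (hS : T ≤ S) : T ≤ conv R S :=
  (le_conv_self T).trans (conv_mono hR hS)

theorem conv_self (R : X ⟶ Y) : conv R R = R :=
  le_antisymm (conv_le_left R R) (le_conv_self R)

theorem conv_eq_right_iff {R S : X ⟶ Y} : conv R S = S ↔ S ≤ R :=
  ⟨fun h => h ▸ conv_le_left R S,
    fun h => le_antisymm (conv_le_right R S) (le_conv h le_rfl)⟩

theorem conv_tensorHom {X' Y' : C} (R S : X ⟶ Y) (T : X' ⟶ Y') :
    conv R S ⊗ₘ T = (dup X ▷ X') ≫ ((R ⊗ₘ S) ⊗ₘ T) ≫ (mrg Y ▷ Y') := by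
  rw [conv, ← tensorHom_id, ← tensorHom_id, tensorHom_comp_tensorHom, tensorHom_comp_tensorHom,
    Category.id_comp, Category.comp_id]

theorem tensorHom_conv {X' Y' : C} (T : X' ⟶ Y') (R S : X ⟶ Y) :
    T ⊗ₘ conv R S = (X' ◁ dup X) ≫ (T ⊗ₘ (R ⊗ₘ S)) ≫ (Y' ◁ mrg Y) := by
  rw [conv, ← id_tensorHom, ← id_tensorHom, tensorHom_comp_tensorHom, tensorHom_comp_tensorHom,
    Category.id_comp, Category.comp_id]

theorem conv_assoc (R S T : X ⟶ Y) : conv (conv R S) T = conv R (conv S T) := by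
  rw [conv, conv_tensorHom, conv, tensorHom_conv]
  simp only [Category.assoc]
  slice_lhs 4 5 => rw [mrg_assoc]
  slice_lhs 3 4 => rw [associator_naturality]
  slice_lhs 1 3 => rw [dup_coassoc]
  simp only [Category.assoc]

end CartesianBicatRel

open CartesianBicatRel in
/-- Convolution `R ⊼ S := Δ;(R⊗S);∇` is associative, commutative, idempotent with unit
`⊤ := !;?`; moreover `⊤` is the greatest element, `R ⊼ S = S ↔ S ≤ R`, and convolution is
the binary meet, so each hom-poset is a meet-semilattice with top. -/
theorem convolution_meet_semilattice {C : Type u} [Category.{v} C] [MonoidalCategory C]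
    [SymmetricCategory C] [∀ X Y : C, PartialOrder (X ⟶ Y)] [CartesianBicatRel C]
    {X Y : C} :
    (∀ R S T : X ⟶ Y,
      dup X ≫ ((dup X ≫ (R ⊗ₘ S) ≫ mrg Y) ⊗ₘ T) ≫ mrg Y =
      dup X ≫ (R ⊗ₘ (dup X ≫ (S ⊗ₘ T) ≫ mrg Y)) ≫ mrg Y) ∧
    (∀ R S : X ⟶ Y, dup X ≫ (R ⊗ₘ S) ≫ mrg Y = dup X ≫ (S ⊗ₘ R) ≫ mrg Y) ∧
    (∀ R : X ⟶ Y, dup X ≫ (R ⊗ₘ R) ≫ mrg Y = R) ∧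
    (∀ R : X ⟶ Y, dup X ≫ (R ⊗ₘ (del X ≫ bng Y)) ≫ mrg Y = R) ∧
    (∀ R : X ⟶ Y, R ≤ del X ≫ bng Y) ∧
    (∀ R S : X ⟶ Y, dup X ≫ (R ⊗ₘ S) ≫ mrg Y = S ↔ S ≤ R) ∧
    (∀ R S : X ⟶ Y, dup X ≫ (R ⊗ₘ S) ≫ mrg Y ≤ R ∧ dup X ≫ (R ⊗ₘ S) ≫ mrg Y ≤ S ∧
      ∀ T : X ⟶ Y, T ≤ R → T ≤ S → T ≤ dup X ≫ (R ⊗ₘ S) ≫ mrg Y) :=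
  ⟨conv_assoc, conv_comm, conv_self, conv_top, le_top, fun _ _ => conv_eq_right_iff,
    fun R S => ⟨conv_le_left R S, conv_le_right R S, fun _ => le_conv⟩⟩
end

section
/- The relational model of the bialgebra theory on the natural numbers (with comultiplication the converse of addition) satisfies the bialgebra equation. Concretely: let A : Rel (ℕ × ℕ) ℕ be the graph of addition, A (x₁, x₂) y ↔ x₁ + x₂ = y. Then the composite relation Rel.comp A A.inv : Rel (ℕ × ℕ) (ℕ × ℕ) equals the relation D defined by D (x₁, x₂) (y₁, y₂) ↔ ∃ a b c d : ℕ, a + b = x₁ ∧ c + d = x₂ ∧ a + c = y₁ ∧ b + d = y₂. Equivalently: for natural numbers, x₁ + x₂ = y₁ + y₂ if and only if there exist a, b, c, d : ℕ with a + b = x₁, c + d = x₂, a + c = y₁ and b + d = y₂. -/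
/-- Converse of a relation (removed from Mathlib; old definition restored). -/
def Rel.inv {α β : Type*} (r : Rel α β) : Rel β α := flip r

/-- Composition of relations (removed from Mathlib; old definition restored). -/
def Rel.comp {α β γ : Type*} (r : Rel α β) (s : Rel β γ) : Rel α γ := fun x z => ∃ y, r x y ∧ s y z

/-- The graph of addition on the natural numbers. -/
def addRel : Rel (ℕ × ℕ) ℕ := fun p y => p.1 + p.2 = y

/-- The right-hand side of the bialgebra equation `Δ;(∇⊗∇)`-style relation. -/
def bialgRel : Rel (ℕ × ℕ) (ℕ × ℕ) := fun x y =>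
  ∃ a b c d : ℕ, a + b = x.1 ∧ c + d = x.2 ∧ a + c = y.1 ∧ b + d = y.2

theorem Rel.comp_graph_inv_iff {α β : Type*} (f : α → β) (x y : α) :
    Rel.comp (fun a b => f a = b) (Rel.inv fun a b => f a = b) x y ↔ f x = f y :=
  ⟨fun ⟨_, hx, hy⟩ => hx.trans hy.symm, fun h => ⟨f x, rfl, h.symm⟩⟩

theorem addRel_comp_inv_iff (x y : ℕ × ℕ) :
    Rel.comp addRel addRel.inv x y ↔ x.1 + x.2 = y.1 + y.2 :=
  Rel.comp_graph_inv_iff (fun p : ℕ × ℕ => p.1 + p.2) x y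

theorem Nat.add_eq_add_iff_exists_decomposition (x₁ x₂ y₁ y₂ : ℕ) :
    x₁ + x₂ = y₁ + y₂ ↔
      ∃ a b c d : ℕ, a + b = x₁ ∧ c + d = x₂ ∧ a + c = y₁ ∧ b + d = y₂ := by
  constructor
  · intro h
    -- Greedy choice of the corner entry `a`; the equation `x₁ + x₂ = y₁ + y₂` makes `d` fit.
    let a := min x₁ y₁
    exact ⟨a, x₁ - a, y₁ - a, x₂ - (y₁ - a), by omega⟩
  · rintro ⟨a, b, c, d, rfl, rfl, rfl, rfl⟩
    ac_rfl

/-- The relational model of the bialgebra theory on ℕ (comultiplication the converse of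
addition) satisfies the bialgebra equation. -/
theorem nat_bialgebra_equation :
    Rel.comp addRel addRel.inv = bialgRel ∧
    (∀ x₁ x₂ y₁ y₂ : ℕ, x₁ + x₂ = y₁ + y₂ ↔
      ∃ a b c d : ℕ, a + b = x₁ ∧ c + d = x₂ ∧ a + c = y₁ ∧ b + d = y₂) := by
  refine ⟨?_, Nat.add_eq_add_iff_exists_decomposition⟩
  ext x y
  exact (addRel_comp_inv_iff x y).trans (Nat.add_eq_add_iff_exists_decomposition _ _ _ _)
end

section
/- A relation R : Rel α β satisfies Rel.comp R R.inv = Eq and Rel.comp R.inv R = Eq (i.e. the converse of R is a two-sided inverse of R in the category of sets and relations) if and only if R is the graph of a bijection, i.e. there exists an equivalence e : α ≃ β with (∀ a b, R a b ↔ e a = b). -/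
namespace Relator

variable {α β : Type*} {R : α → β → Prop}

theorem comp_flip_eq_eq_iff : Relation.Comp R (flip R) = Eq ↔ LeftTotal R ∧ LeftUnique R := by
  constructor
  · intro h
    refine ⟨fun a => ?_, fun a a' b hab ha'b => h ▸ ⟨b, hab, ha'b⟩⟩
    obtain ⟨b, hab, -⟩ : Relation.Comp R (flip R) a a := h ▸ rfl
    exact ⟨b, hab⟩
  · rintro ⟨htot, huniq⟩
    ext a a'
    constructor
    · rintro ⟨b, hab, ha'b⟩
      exact huniq hab ha'b
    · rintro rfl
      obtain ⟨b, hab⟩ := htot a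
      exact ⟨b, hab, hab⟩

theorem leftUnique_flip_iff : LeftUnique (flip R) ↔ RightUnique R :=
  ⟨fun h _ _ _ hab hac => h hab hac, fun h _ _ _ hab hac => h hab hac⟩

theorem flip_comp_eq_eq_iff : Relation.Comp (flip R) R = Eq ↔ RightTotal R ∧ RightUnique R :=
  comp_flip_eq_eq_iff.trans (and_congr Iff.rfl leftUnique_flip_iff)

noncomputable def BiTotal.equiv (ht : BiTotal R) (hu : BiUnique R) : α ≃ β where
  toFun a := (ht.1 a).choose
  invFun b := (ht.2 b).choose
  left_inv a := hu.1 (ht.2 _).choose_spec (ht.1 a).choose_spec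
  right_inv b := hu.2 (ht.1 _).choose_spec (ht.2 b).choose_spec

theorem BiTotal.rel_iff_equiv_apply_eq (ht : BiTotal R) (hu : BiUnique R) (a : α) (b : β) :
    R a b ↔ ht.equiv hu a = b :=
  ⟨fun hab => hu.2 (ht.1 a).choose_spec hab, by rintro rfl; exact (ht.1 a).choose_spec⟩

theorem biTotal_and_biUnique_iff_exists_equiv :
    BiTotal R ∧ BiUnique R ↔ ∃ e : α ≃ β, ∀ a b, R a b ↔ e a = b := by
  constructor
  · rintro ⟨ht, hu⟩
    exact ⟨ht.equiv hu, ht.rel_iff_equiv_apply_eq hu⟩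
  · rintro ⟨e, he⟩
    obtain rfl : R = fun a b => e a = b := funext₂ fun a b => propext (he a b)
    refine ⟨⟨fun a => ⟨e a, rfl⟩, fun b => ⟨e.symm b, e.apply_symm_apply b⟩⟩, ?_, ?_⟩
    · rintro a a' b rfl hab
      exact e.injective hab.symm
    · rintro a b c rfl rfl
      rfl

end Relator

open Relator in
/-- A relation whose converse is a two-sided inverse in the category of sets and relations
is exactly the graph of a bijection. -/
theorem rel_inv_twoSidedInverse_iff_bijection {α β : Type*} (R : Rel α β) :
    (Relation.Comp R (flip R) = Eq ∧ Relation.Comp (flip R) R = Eq) ↔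
      ∃ e : α ≃ β, ∀ a b, R a b ↔ e a = b := by
  rw [comp_flip_eq_eq_iff, flip_comp_eq_eq_iff, ← biTotal_and_biUnique_iff_exists_equiv,
    BiTotal, BiUnique, and_and_and_comm]
end
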